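/- arXiv:1203.4696 — 5 statements merged into one kernel-verified Lean document; each statement's English description precedes it below -/
import Mathlib

section
/- Let J be a nonempty subset of the positive integers and ω a nonprincipal ultrafilter on the positive integers. Define σ_J(x) = inf_{y∈J} |log(x/y)| for each positive integer x. Then Cone_ω(J) = {0} if and only if lim_{n→ω} σ_J(n) = ∞ (i.e., for every M, the set {n : σ_J(n) ≥ M} belongs to ω). -/
open Filter

noncomputable section

/-- The asymptotic cone of a set `J` of positive integers along the ultrafilter `ω`,
identified with a subset of `ℝ`: the set of ultralimits `lim_ω u_n/n` of sequences in `J`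
with at most linear growth. -/
def coneSet (ω : Ultrafilter ℕ) (J : Set ℕ) : Set ℝ :=
  {r | ∃ u : ℕ → ℕ, (∀ n, u n ∈ J) ∧ (∃ C : ℝ, ∀ n : ℕ, 1 ≤ n → (u n : ℝ) ≤ C * n) ∧
    Tendsto (fun n => (u n : ℝ) / n) ω (nhds r)}

/-- `σ_J(x) = inf_{y ∈ J} |log(x/y)|`, the multiplicative distance from `x` to `J`. -/
noncomputable def sigmaJ (J : Set ℕ) (x : ℕ) : ℝ :=
  sInf ((fun y : ℕ => |Real.log ((x : ℝ) / (y : ℝ))|) '' J)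

lemma sigmaJ_le {J : Set ℕ} {y : ℕ} (hy : y ∈ J) (x : ℕ) :
    sigmaJ J x ≤ |Real.log ((x : ℝ) / (y : ℝ))| :=
  csInf_le ⟨0, by rintro z ⟨w, -, rfl⟩; exact abs_nonneg _⟩ ⟨y, hy, rfl⟩

/-- Theorem: for a nonempty set `J` of positive integers and a nonprincipal ultrafilter `ω`,
`Cone_ω(J) = {0}` if and only if `σ_J(n) → ∞` along `ω`. -/
theorem statement11 (J : Set ℕ) (hJne : J.Nonempty) (hJpos : ∀ x ∈ J, 0 < x)
    (ω : Ultrafilter ℕ) (hω : (ω : Filter ℕ) ≤ Filter.cofinite) :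
    coneSet ω J = {0} ↔ ∀ M : ℝ, {n : ℕ | M ≤ sigmaJ J n} ∈ ω := by
  classical
  obtain ⟨j₀, hj₀⟩ := hJne
  have hωtop : (ω : Filter ℕ) ≤ atTop := by rwa [← Nat.cofinite_eq_atTop]
  constructor
  · intro hcone M
    by_contra hM
    have hS : {n : ℕ | sigmaJ J n < M} ∈ ω := by
      have : {n : ℕ | M ≤ sigmaJ J n}ᶜ ∈ ω := (Ultrafilter.compl_mem_iff_notMem).2 hM
      convert this using 1
      ext n; simp [not_le]
    set u : ℕ → ℕ := fun n =>
      if h : ∃ y, y ∈ J ∧ |Real.log ((n : ℝ) / (y : ℝ))| < M then h.choose else j₀ with hudef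
    have huJ : ∀ n, u n ∈ J := by
      intro n
      rw [hudef]
      by_cases h : ∃ y, y ∈ J ∧ |Real.log ((n : ℝ) / (y : ℝ))| < M
      · simp only [dif_pos h]; exact h.choose_spec.1
      · simp only [dif_neg h]; exact hj₀
    have hspec : ∀ n : ℕ, (∃ y, y ∈ J ∧ |Real.log ((n : ℝ) / (y : ℝ))| < M) →
        |Real.log ((n : ℝ) / (u n : ℝ))| < M := by
      intro n h
      rw [hudef]; simp only [dif_pos h]; exact h.choose_spec.2
    have hex : ∀ n ∈ {n : ℕ | sigmaJ J n < M},
        ∃ y, y ∈ J ∧ |Real.log ((n : ℝ) / (y : ℝ))| < M := by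
      intro n hn
      have hne : ((fun y : ℕ => |Real.log ((n : ℝ) / (y : ℝ))|) '' J).Nonempty :=
        ⟨_, j₀, hj₀, rfl⟩
      obtain ⟨z, hz, hzlt⟩ := exists_lt_of_csInf_lt hne hn
      obtain ⟨y, hyJ, rfl⟩ := hz
      exact ⟨y, hyJ, hzlt⟩
    -- bounds on u n / n when the existential holds and n ≥ 1
    have hbounds : ∀ n : ℕ, 1 ≤ n → (∃ y, y ∈ J ∧ |Real.log ((n : ℝ) / (y : ℝ))| < M) →
        Real.exp (-M) < (u n : ℝ) / n ∧ (u n : ℝ) / n < Real.exp M := by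
      intro n hn h
      have hM' := hspec n h
      have hnpos : (0 : ℝ) < n := by exact_mod_cast hn
      have hupos : (0 : ℝ) < u n := by exact_mod_cast hJpos _ (huJ n)
      have htpos : (0 : ℝ) < (u n : ℝ) / n := div_pos hupos hnpos
      rw [show ((n : ℝ) / (u n : ℝ)) = ((u n : ℝ) / n)⁻¹ from (inv_div _ _).symm,
        Real.log_inv, abs_neg, abs_lt] at hM'
      constructor
      · calc Real.exp (-M) < Real.exp (Real.log ((u n : ℝ) / n)) :=
              Real.exp_lt_exp.2 hM'.1
          _ = (u n : ℝ) / n := Real.exp_log htpos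
      · calc (u n : ℝ) / n = Real.exp (Real.log ((u n : ℝ) / n)) := (Real.exp_log htpos).symm
          _ < Real.exp M := Real.exp_lt_exp.2 hM'.2
    set C : ℝ := max (Real.exp M) (j₀ : ℝ) with hCdef
    have hCpos : 0 < C := lt_max_of_lt_left (Real.exp_pos M)
    have hCb : ∀ n : ℕ, 1 ≤ n → (u n : ℝ) ≤ C * n := by
      intro n hn
      have hnpos : (0 : ℝ) < n := by exact_mod_cast hn
      have hn1 : (1 : ℝ) ≤ n := by exact_mod_cast hn
      by_cases h : ∃ y, y ∈ J ∧ |Real.log ((n : ℝ) / (y : ℝ))| < M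
      · have := (hbounds n hn h).2
        have : (u n : ℝ) < Real.exp M * n := by
          rwa [div_lt_iff₀ hnpos] at this
        exact this.le.trans (mul_le_mul_of_nonneg_right (le_max_left _ _) hnpos.le)
      · rw [hudef]
        simp only [dif_neg h]
        calc (j₀ : ℝ) = (j₀ : ℝ) * 1 := (mul_one _).symm
          _ ≤ (j₀ : ℝ) * n := mul_le_mul_of_nonneg_left hn1 (Nat.cast_nonneg _)
          _ ≤ C * n := mul_le_mul_of_nonneg_right (le_max_right _ _) hnpos.le
    set f : ℕ → ℝ := fun n => (u n : ℝ) / n with hfdef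
    have hfmem : ∀ n, f n ∈ Set.Icc (0 : ℝ) C := by
      intro n
      rcases Nat.eq_zero_or_pos n with rfl | hn
      · simp [hfdef, hCpos.le]
      · refine ⟨div_nonneg (Nat.cast_nonneg _) (Nat.cast_nonneg _), ?_⟩
        have hnpos : (0 : ℝ) < n := by exact_mod_cast hn
        rw [div_le_iff₀ hnpos]
        exact hCb n hn
    have hpre : f ⁻¹' Set.Icc (0:ℝ) C ∈ (ω : Filter ℕ) := Filter.univ_mem' hfmem
    obtain ⟨r, hrIcc, hrle⟩ := (isCompact_Icc (a := (0:ℝ)) (b := C)).ultrafilter_le_nhds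
      (ω.map f) (le_principal_iff.2 (Ultrafilter.mem_map.2 hpre))
    have hlim : Tendsto f ω (nhds r) := by rwa [Ultrafilter.coe_map] at hrle
    have hrpos : Real.exp (-M) ≤ r := by
      refine ge_of_tendsto hlim ?_
      have h1 : {n : ℕ | 1 ≤ n} ∈ ω := hωtop (mem_atTop 1)
      filter_upwards [hS, h1] with n hn hn1
      exact (hbounds n hn1 (hex n hn)).1.le
    have : r ∈ coneSet ω J := ⟨u, huJ, ⟨C, hCb⟩, hlim⟩
    rw [hcone] at this
    have : r = 0 := this
    rw [this] at hrpos
    exact absurd hrpos (not_le.2 (Real.exp_pos _))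
  · intro h
    apply Set.eq_singleton_iff_unique_mem.2
    constructor
    · refine ⟨fun _ => j₀, fun _ => hj₀, ⟨(j₀ : ℝ), fun n hn => ?_⟩, ?_⟩
      · have hn1 : (1 : ℝ) ≤ n := by exact_mod_cast hn
        calc (j₀ : ℝ) = (j₀ : ℝ) * 1 := (mul_one _).symm
          _ ≤ (j₀ : ℝ) * n := mul_le_mul_of_nonneg_left hn1 (Nat.cast_nonneg _)
      · exact (tendsto_const_div_atTop_nhds_zero_nat (j₀ : ℝ)).mono_left hωtop
    · rintro r ⟨u, huJ, ⟨C, hC⟩, hlim⟩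
      by_contra hr0
      have hr0' : 0 ≤ r :=
        ge_of_tendsto hlim (Eventually.of_forall fun n =>
          div_nonneg (Nat.cast_nonneg _) (Nat.cast_nonneg _))
      have hrpos : 0 < r := lt_of_le_of_ne hr0' (Ne.symm hr0)
      have hlog : Tendsto (fun n => |Real.log ((u n : ℝ) / n)|) ω
          (nhds |Real.log r|) :=
        ((Real.continuousAt_log hrpos.ne').tendsto.comp hlim).abs
      have hev : ∀ᶠ n in (ω : Filter ℕ),
          |Real.log ((u n : ℝ) / n)| < |Real.log r| + 1 :=
        hlog.eventually (gt_mem_nhds (lt_add_one _))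
      have hσ : ∀ n, sigmaJ J n ≤ |Real.log ((u n : ℝ) / n)| := by
        intro n
        have := sigmaJ_le (huJ n) n
        rwa [show ((n : ℝ) / (u n : ℝ)) = ((u n : ℝ) / n)⁻¹ from (inv_div _ _).symm,
          Real.log_inv, abs_neg] at this
      have hM := h (|Real.log r| + 1)
      obtain ⟨n, hn1, hn2⟩ := Filter.nonempty_of_mem (Filter.inter_mem hev hM)
      exact absurd hn1 (not_lt.2 (hn2.trans (hσ n)))
end
end

section
/- Let {α_m : m ≥ 0} be a set of positive integers with α_{m+1}/α_m → ∞, let (I_n)_{n≥1} be a partition of {α_m : m ≥ 0} into infinitely many infinite subsets, and for each n let ω_n be a nonprincipal ultrafilter on the positive integers with I_n ∈ ω_n. Then for every subset M of the positive integers there exists a nonempty subset J of the positive integers such that {n : Cone_{ω_n}(J) = {0}} = M; that is, the map J ↦ {n : Cone_{ω_n}(J) = {0}} from subsets of the positive integers to subsets of the positive integers is surjective. -/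
open Filter

noncomputable section

/-!
The relevant sets `J` lie in the lacunary set `S = {α_m}`: any two distinct large elements
of `S` differ by an arbitrarily large factor. Hence if `u_k ∈ J` satisfies `u_k ≤ C k` and
`u_k/k → r > 0` along `ω`, with `S ∈ ω`, then for `ω`-most `k ∈ S` the only admissible value
is `u_k = k`, forcing `J ∈ ω`. Conversely, `J ∈ ω` gives the point `1` of the cone via
`u_k = k`. So `Cone_ω(J) = {0}` exactly when `J ∉ ω`, and the choice
`J = {α_0} ∪ ⋃_{n ∉ M} I_n` lies in `ω_n` precisely when `n ∉ M`.
-/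

def IsLacunary (S : Set ℕ) : Prop :=
  ∀ C : ℝ, ∀ᶠ x in atTop, x ∈ S → ∀ y ∈ S, y = x ∨ C * y < x ∨ C * (x : ℝ) < y

lemma exists_mul_lt_of_tendsto_ratio {α : ℕ → ℕ}
    (hα : Tendsto (fun m => (α (m + 1) : ℝ) / α m) atTop atTop) {K : ℝ} (hK : 1 ≤ K) :
    ∃ m₀, ∀ a b, m₀ ≤ a → a < b → K * α a < α b := by
  obtain ⟨m₀, hm₀⟩ := eventually_atTop.mp (hα.eventually (eventually_gt_atTop K))
  have hstep : ∀ m, m₀ ≤ m → K * α m < α (m + 1) := by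
    intro m hm
    have hratio := hm₀ m hm
    have hpos : (0 : ℝ) < α m := by
      refine (Nat.cast_nonneg _).lt_of_ne fun h => ?_
      rw [← h, div_zero] at hratio
      linarith
    exact (lt_div_iff₀ hpos).mp hratio
  refine ⟨m₀, fun a b ha hab => ?_⟩
  induction b, hab using Nat.le_induction with
  | base => exact hstep a ha
  | succ b hab ih =>
    have : (α b : ℝ) ≤ K * α b := le_mul_of_one_le_left (Nat.cast_nonneg _) hK
    linarith [hstep b (by omega)]

lemma isLacunary_range_of_tendsto_ratio {α : ℕ → ℕ}
    (hα : Tendsto (fun m => (α (m + 1) : ℝ) / α m) atTop atTop) :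
    IsLacunary (Set.range α) := by
  intro C
  set K := max C 1
  obtain ⟨m₀, hgap⟩ := exists_mul_lt_of_tendsto_ratio hα (K := K) (le_max_right C 1)
  set B := (Finset.range (m₀ + 1)).sup α
  have hB : ∀ j, j ≤ m₀ → (α j : ℝ) ≤ B := fun j hj =>
    by exact_mod_cast Finset.le_sup (Finset.mem_range.mpr (Nat.lt_succ_of_le hj))
  have hKB : (B : ℝ) ≤ K * B := le_mul_of_one_le_left (Nat.cast_nonneg _) (le_max_right C 1)
  have hCK : ∀ y : ℕ, C * (y : ℝ) ≤ K * y := fun y =>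
    mul_le_mul_of_nonneg_right (le_max_left C 1) (Nat.cast_nonneg _)
  filter_upwards [tendsto_natCast_atTop_atTop.eventually_gt_atTop (K * B)]
  rintro _ hx ⟨m, rfl⟩ _ ⟨m', rfl⟩
  have hm : m₀ < m := by
    by_contra h
    linarith [hB m (by omega)]
  by_cases hm' : m' ≤ m₀
  · refine Or.inr (Or.inl ?_)
    have hK : (0 : ℝ) ≤ K := zero_le_one.trans (le_max_right C 1)
    linarith [hCK (α m'), mul_le_mul_of_nonneg_left (hB m' hm') hK]
  rcases lt_trichotomy m' m with hlt | rfl | hgt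
  · exact Or.inr (Or.inl (by linarith [hCK (α m'), hgap m' m (by omega) hlt]))
  · exact Or.inl rfl
  · exact Or.inr (Or.inr (by linarith [hCK (α m), hgap m m' (by omega) hgt]))

section Cone

variable {ω : Ultrafilter ℕ} {J : Set ℕ}

lemma zero_mem_coneSet (hJ : J.Nonempty) (hω : (ω : Filter ℕ) ≤ atTop) :
    (0 : ℝ) ∈ coneSet ω J := by
  obtain ⟨j, hj⟩ := hJ
  refine ⟨fun _ => j, fun _ => hj, ⟨j, fun k hk => ?_⟩, ?_⟩
  · exact le_mul_of_one_le_right (Nat.cast_nonneg _) (by exact_mod_cast hk)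
  · exact (tendsto_const_nhds.div_atTop tendsto_natCast_atTop_atTop).mono_left hω

lemma one_mem_coneSet (hJ : J ∈ ω) (hω : (ω : Filter ℕ) ≤ atTop) : (1 : ℝ) ∈ coneSet ω J := by
  classical
  obtain ⟨j, hj⟩ := Ultrafilter.nonempty_of_mem hJ
  refine ⟨fun k => if k ∈ J then k else j, fun k => ?_, ⟨j + 1, fun k hk => ?_⟩, ?_⟩
  · dsimp only
    split_ifs <;> assumption
  · have hk : (1 : ℝ) ≤ k := by exact_mod_cast hk
    dsimp only
    split_ifs <;> nlinarith [(Nat.cast_nonneg j : (0 : ℝ) ≤ j)]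
  · refine tendsto_const_nhds.congr' ?_
    filter_upwards [hJ, hω (eventually_ne_atTop 0)] with k hkJ hk
    simp [hkJ, hk]

lemma coneSet_subset_zero_of_isLacunary {S : Set ℕ} (hS : IsLacunary S) (hJS : J ⊆ S)
    (hSω : S ∈ ω) (hJω : J ∉ ω) (hω : (ω : Filter ℕ) ≤ atTop) : coneSet ω J ⊆ {0} := by
  rintro r ⟨u, huJ, ⟨C, hC⟩, hu⟩
  by_contra hr
  have hr : 0 < r :=
    (ge_of_tendsto' hu fun k => by positivity).lt_of_ne (Ne.symm hr)
  set K := max C (2 / r)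
  obtain ⟨k, hkS, hkJ, hk, huC, hur, hlac⟩ : ∃ k, k ∈ S ∧ k ∉ J ∧ 1 ≤ k ∧
      (u k : ℝ) ≤ C * k ∧ r / 2 < (u k : ℝ) / k ∧
      (k ∈ S → ∀ y ∈ S, y = k ∨ K * y < k ∨ K * (k : ℝ) < y) :=
    Eventually.exists (f := (ω : Filter ℕ)) <| by
      filter_upwards [hSω, Ultrafilter.compl_mem_iff_notMem.mpr hJω, hω (eventually_ge_atTop 1),
        hu.eventually (eventually_gt_nhds (half_lt_self hr)), hω (hS K)]
        with k hkS hkJ hk hur hlac using ⟨hkS, hkJ, hk, hC k hk, hur, hlac⟩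
  have hk : (0 : ℝ) < k := by exact_mod_cast hk
  have hur : r / 2 * k < u k := (lt_div_iff₀ hk).mp hur
  rcases hlac hkS (u k) (hJS (huJ k)) with heq | hsmall | hlarge
  · exact hkJ (heq ▸ huJ k)
  · have h2r : 2 / r * (u k : ℝ) ≤ K * u k :=
      mul_le_mul_of_nonneg_right (le_max_right _ _) (Nat.cast_nonneg _)
    have : (k : ℝ) < 2 / r * u k := by
      rw [div_mul_eq_mul_div, lt_div_iff₀ hr]
      linarith
    linarith
  · nlinarith [le_max_left C (2 / r)]

lemma coneSet_eq_zero_iff_notMem {S : Set ℕ} (hS : IsLacunary S) (hJS : J ⊆ S)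
    (hJ : J.Nonempty) (hSω : S ∈ ω) (hω : (ω : Filter ℕ) ≤ atTop) :
    coneSet ω J = {0} ↔ J ∉ ω := by
  refine ⟨fun hcone hJω => ?_, fun hJω => ?_⟩
  · have h := one_mem_coneSet hJω hω
    rw [hcone] at h
    exact one_ne_zero h
  · exact (coneSet_subset_zero_of_isLacunary hS hJS hSω hJω hω).antisymm
      (Set.singleton_subset_iff.mpr (zero_mem_coneSet hJ hω))

end Cone

lemma union_iUnion_mem_ultrafilter_iff {ι β : Type*} {I : ι → Set β}
    (hI : Pairwise (Function.onFun Disjoint I)) {ω : ι → Ultrafilter β}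
    (hω : ∀ n, (ω n : Filter β) ≤ cofinite) (hωI : ∀ n, I n ∈ ω n)
    {F : Set β} (hF : F.Finite) (M : Set ι) (n : ι) :
    F ∪ (⋃ i ∉ M, I i) ∈ ω n ↔ n ∉ M := by
  refine ⟨fun hJ hn => ?_, fun hn => ?_⟩
  · have hsub : (F ∪ ⋃ i ∉ M, I i) ∩ I n ⊆ F := by
      rintro x ⟨hx | hx, hxn⟩
      · exact hx
      · obtain ⟨i, hi, hxi⟩ := Set.mem_iUnion₂.mp hx
        exact absurd hxi (Set.disjoint_left.mp (hI fun h : n = i => hi (h ▸ hn)) hxn)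
    have hFω : F ∈ ω n := (ω n).mem_of_superset ((ω n).inter_mem hJ (hωI n)) hsub
    exact Ultrafilter.compl_notMem_iff.mpr hFω (hω n hF.compl_mem_cofinite)
  · exact (ω n).mem_of_superset (hωI n)
      (Set.subset_union_of_subset_right (Set.subset_biUnion_of_mem hn) F)

theorem statement12_general (α : ℕ → ℕ) (hαpos : ∀ m, 0 < α m)
    (hα : Tendsto (fun m => (α (m + 1) : ℝ) / (α m : ℝ)) atTop atTop)
    (I : ℕ → Set ℕ)
    (hIdisj : Pairwise (Function.onFun Disjoint I))
    (hIcover : (⋃ n, I n) = Set.range α)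
    (ω : ℕ → Ultrafilter ℕ) (hω : ∀ n, ((ω n : Filter ℕ)) ≤ Filter.cofinite)
    (hωI : ∀ n, I n ∈ ω n) :
    ∀ M : Set ℕ, ∃ J : Set ℕ, J.Nonempty ∧ (∀ x ∈ J, 0 < x) ∧
      {n : ℕ | coneSet (ω n) J = {0}} = M := by
  intro M
  have hI : ∀ n, I n ⊆ Set.range α := fun n => hIcover ▸ Set.subset_iUnion I n
  set J := {α 0} ∪ ⋃ i ∉ M, I i
  have hJ : J ⊆ Set.range α :=
    Set.union_subset (Set.singleton_subset_iff.mpr ⟨0, rfl⟩) (Set.iUnion₂_subset fun i _ => hI i)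
  refine ⟨J, ⟨α 0, Or.inl rfl⟩, fun x hx => ?_, Set.ext fun n => ?_⟩
  · obtain ⟨m, rfl⟩ := hJ hx
    exact hαpos m
  have hωn : (ω n : Filter ℕ) ≤ atTop := Nat.cofinite_eq_atTop ▸ hω n
  rw [Set.mem_ofPred_eq, coneSet_eq_zero_iff_notMem (isLacunary_range_of_tendsto_ratio hα) hJ
    ⟨α 0, Or.inl rfl⟩ ((ω n).mem_of_superset (hωI n) (hI n)) hωn,
    union_iUnion_mem_ultrafilter_iff hIdisj hω hωI (Set.finite_singleton _), not_not]

/-- Theorem: let `{α_m}` be a set of positive integers with `α_{m+1}/α_m → ∞`, let `(I_n)`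
be a partition of it into infinitely many infinite pieces, and for each `n` let `ω_n` be a
nonprincipal ultrafilter containing `I_n`. Then every set `M` of indices arises as
`{n : Cone_{ω_n}(J) = {0}}` for some nonempty set `J` of positive integers; i.e. the map
`J ↦ {n : Cone_{ω_n}(J) = {0}}` is surjective. -/
theorem statement12 (α : ℕ → ℕ) (hαpos : ∀ m, 0 < α m)
    (hα : Tendsto (fun m => (α (m + 1) : ℝ) / (α m : ℝ)) atTop atTop)
    (I : ℕ → Set ℕ)
    (hIdisj : Pairwise (Function.onFun Disjoint I))
    (hIcover : (⋃ n, I n) = Set.range α)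
    (hIinf : ∀ n, (I n).Infinite)
    (ω : ℕ → Ultrafilter ℕ) (hω : ∀ n, ((ω n : Filter ℕ)) ≤ Filter.cofinite)
    (hωI : ∀ n, I n ∈ ω n) :
    ∀ M : Set ℕ, ∃ J : Set ℕ, J.Nonempty ∧ (∀ x ∈ J, 0 < x) ∧
      {n : ℕ | coneSet (ω n) J = {0}} = M :=
  statement12_general α hαpos hα I hIdisj hIcover ω hω hωI

end
end

section
/- Let J be a nonempty subset of the positive integers and ω a nonprincipal ultrafilter on the positive integers. Then: (1) Cone_ω(J) is a bounded subset of ℝ if and only if J is ω-bounded; (2) 0 is an isolated point of Cone_ω(J) if and only if J is ω-discrete. -/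
open Filter

noncomputable section

/-- `J` is `ω`-bounded: for some `C > 1`, `ρ_C(n)/n → ∞` along `ω`, where `ρ_C(n)` is the
smallest element of `J ∩ [Cn, ∞)` (`∞` if empty); equivalently, for every `M`, for
`ω`-almost every `n` every element `x ∈ J` with `x ≥ Cn` satisfies `x ≥ Mn`. -/
def OmegaBounded (ω : Ultrafilter ℕ) (J : Set ℕ) : Prop :=
  ∃ C : ℝ, 1 < C ∧ ∀ M : ℝ,
    {n : ℕ | ∀ x ∈ J, C * n ≤ (x : ℝ) → M * n ≤ (x : ℝ)} ∈ ω

/-- `J` is `ω`-discrete: for some `0 < c < 1`, `λ_c(n)/n → 0` along `ω`, where `λ_c(n)` is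
the largest element of `{0} ∪ (J ∩ [0, cn])`; equivalently, for every `ε > 0`, for
`ω`-almost every `n` every element `x ∈ J` with `x ≤ cn` satisfies `x ≤ εn`. -/
def OmegaDiscrete (ω : Ultrafilter ℕ) (J : Set ℕ) : Prop :=
  ∃ c : ℝ, 0 < c ∧ c < 1 ∧ ∀ ε : ℝ, 0 < ε →
    {n : ℕ | ∀ x ∈ J, (x : ℝ) ≤ c * n → (x : ℝ) ≤ ε * n} ∈ ω

/-- The set of positive integers is in any ultrafilter extending cofinite. -/
lemma mem_pos_of_le_cofinite (ω : Ultrafilter ℕ) (hω : (ω : Filter ℕ) ≤ Filter.cofinite) :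
    {n : ℕ | 1 ≤ n} ∈ ω := by
  apply hω
  rw [mem_cofinite]
  have : {n : ℕ | 1 ≤ n}ᶜ = {n : ℕ | n < 1} := by
    ext n; simp [Nat.lt_one_iff]
  rw [this]
  exact Set.finite_lt_nat 1

/-- Any bounded sequence has an ultrafilter limit. -/
lemma exists_ulim (ω : Ultrafilter ℕ) (u : ℕ → ℕ) (C : ℝ)
    (hb : ∀ n : ℕ, 1 ≤ n → (u n : ℝ) ≤ C * n) :
    ∃ r : ℝ, 0 ≤ r ∧ Tendsto (fun n => (u n : ℝ) / n) ω (nhds r) := by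
  set K : ℝ := max C 0 with hK
  have hmem : ∀ n : ℕ, (u n : ℝ) / n ∈ Set.Icc (0 : ℝ) K := by
    intro n
    rcases Nat.eq_zero_or_pos n with h0 | h1
    · subst h0
      simp only [Nat.cast_zero, div_zero]
      exact ⟨le_refl 0, le_max_right C 0⟩
    · have hn : (0 : ℝ) < n := by exact_mod_cast h1
      constructor
      · positivity
      · rw [div_le_iff₀ hn]
        calc (u n : ℝ) ≤ C * n := hb n h1
          _ ≤ K * n := by
            apply mul_le_mul_of_nonneg_right (le_max_left C 0) hn.le
  have hle : ↑(ω.map fun n => (u n : ℝ) / n) ≤ Filter.principal (Set.Icc (0 : ℝ) K) := by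
    rw [le_principal_iff, Ultrafilter.mem_coe, Ultrafilter.mem_map]
    exact Filter.univ_mem' hmem
  obtain ⟨r, hr, hconv⟩ := (isCompact_Icc (a := (0:ℝ)) (b := K)).ultrafilter_le_nhds _ hle
  refine ⟨r, hr.1, ?_⟩
  rwa [Ultrafilter.coe_map] at hconv

lemma cone_nonneg (ω : Ultrafilter ℕ) (J : Set ℕ) (r : ℝ) (hr : r ∈ coneSet ω J) : 0 ≤ r := by
  obtain ⟨u, _, _, htend⟩ := hr
  refine ge_of_tendsto htend ?_
  filter_upwards with n
  positivity

/-- Theorem: (1) `Cone_ω(J)` is bounded iff `J` is `ω`-bounded; (2) `0` is isolated in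
`Cone_ω(J)` iff `J` is `ω`-discrete. -/
theorem statement13 (J : Set ℕ) (hJne : J.Nonempty) (hJpos : ∀ x ∈ J, 0 < x)
    (ω : Ultrafilter ℕ) (hω : (ω : Filter ℕ) ≤ Filter.cofinite) :
    (Bornology.IsBounded (coneSet ω J) ↔ OmegaBounded ω J) ∧
    ((∃ ε : ℝ, 0 < ε ∧ ∀ x ∈ coneSet ω J, |x| < ε → x = 0) ↔ OmegaDiscrete ω J) := by
  obtain ⟨j, hj⟩ := hJne
  have hpos : {n : ℕ | 1 ≤ n} ∈ ω := mem_pos_of_le_cofinite ω hω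
  constructor
  · constructor
    · -- bounded → ω-bounded
      intro hbdd
      obtain ⟨R, hR⟩ := hbdd.subset_closedBall 0
      set C : ℝ := max R 0 + 2 with hCdef
      refine ⟨C, by have := le_max_right R (0:ℝ); linarith, ?_⟩
      intro M
      by_contra hM
      rw [← Ultrafilter.compl_mem_iff_notMem] at hM
      -- construct a cone point ≥ C
      set P : ℕ → Prop := fun n => ∃ x ∈ J, C * n ≤ (x : ℝ) ∧ (x : ℝ) < M * n with hPdef
      have hSP : {n : ℕ | P n} ∈ ω := by
        apply ω.sets_of_superset hM
        intro n hn
        simp only [Set.mem_compl_iff, Set.mem_setOf_eq] at hn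
        push_neg at hn
        obtain ⟨x, hx, h1, h2⟩ := hn
        exact ⟨x, hx, h1, h2⟩
      classical
      set u : ℕ → ℕ := fun n => if h : P n then h.choose else j with hu
      have huJ : ∀ n, u n ∈ J := by
        intro n
        by_cases h : P n
        · simp only [hu, dif_pos h]; exact h.choose_spec.1
        · simp only [hu, dif_neg h]; exact hj
      set K : ℝ := max M (j : ℝ) with hKdef
      have hub : ∀ n : ℕ, 1 ≤ n → (u n : ℝ) ≤ K * n := by
        intro n hn
        have hn' : (1 : ℝ) ≤ n := by exact_mod_cast hn
        by_cases h : P n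
        · simp only [hu, dif_pos h]
          have := h.choose_spec.2.2
          calc ((h.choose : ℕ) : ℝ) ≤ M * n := this.le
            _ ≤ K * n := mul_le_mul_of_nonneg_right (le_max_left _ _) (by linarith)
        · simp only [hu, dif_neg h]
          calc (j : ℝ) = (j : ℝ) * 1 := by ring
            _ ≤ K * n := by
              apply mul_le_mul (le_max_right _ _) hn' zero_le_one
              have : (0:ℝ) ≤ (j:ℝ) := Nat.cast_nonneg j
              exact le_trans this (le_max_right _ _)
      obtain ⟨r, hr0, htend⟩ := exists_ulim ω u K hub
      have hrc : r ∈ coneSet ω J := ⟨u, huJ, ⟨K, hub⟩, htend⟩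
      have hrR : r ≤ R := by
        have := hR hrc
        rw [Metric.mem_closedBall, Real.dist_eq, sub_zero] at this
        exact (abs_le.mp this).2
      have hrC : C ≤ r := by
        refine ge_of_tendsto htend ?_
        filter_upwards [hSP, hpos] with n hn hn1
        have hn' : (0 : ℝ) < n := by exact_mod_cast hn1
        have : C * n ≤ (u n : ℝ) := by
          simp only [hu, dif_pos hn]
          exact hn.choose_spec.2.1
        rw [le_div_iff₀ hn']
        linarith
      have : R < C := by
        have := le_max_left R (0:ℝ); simp only [hCdef]; linarith
      linarith
    · -- ω-bounded → bounded
      rintro ⟨C, hC1, hC⟩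
      have hsub : coneSet ω J ⊆ Set.Icc 0 C := by
        intro r hr
        refine ⟨cone_nonneg ω J r hr, ?_⟩
        by_contra hlt
        push_neg at hlt
        obtain ⟨u, huJ, ⟨C', hub⟩, htend⟩ := hr
        have hev : ∀ᶠ n in (ω : Filter ℕ), C < (u n : ℝ) / n :=
          htend.eventually_const_lt hlt
        have hT := hC (C' + 1)
        have hmem : {n : ℕ | ∀ x ∈ J, C * n ≤ (x:ℝ) → (C'+1) * n ≤ (x:ℝ)} ∩
            {n : ℕ | 1 ≤ n} ∩ {n : ℕ | C < (u n : ℝ) / n} ∈ ω :=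
          inter_mem (inter_mem hT hpos) hev
        obtain ⟨n, ⟨⟨hTn, hn1⟩, hcn⟩⟩ := ω.nonempty_of_mem hmem
        simp only [Set.mem_setOf_eq] at hTn hn1 hcn
        have hn' : (0 : ℝ) < n := by exact_mod_cast hn1
        have h1 : C * n ≤ (u n : ℝ) := by
          rw [lt_div_iff₀ hn'] at hcn; linarith
        have h2 : (C' + 1) * n ≤ (u n : ℝ) := hTn (u n) (huJ n) h1
        have h3 : (u n : ℝ) ≤ C' * n := hub n hn1
        nlinarith
      exact (Metric.isBounded_Icc (0:ℝ) C).subset hsub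
  · constructor
    · -- isolated → ω-discrete
      rintro ⟨ε, hε, hiso⟩
      set c : ℝ := min ε 1 / 2 with hcdef
      have hc0 : 0 < c := by
        have := lt_min hε one_pos; simp only [hcdef]; linarith
      have hc1 : c < 1 := by
        have := min_le_right ε 1; simp only [hcdef]; linarith
      have hcε : c < ε := by
        have := min_le_left ε 1; simp only [hcdef]; linarith
      refine ⟨c, hc0, hc1, ?_⟩
      intro δ hδ
      by_contra hm
      rw [← Ultrafilter.compl_mem_iff_notMem] at hm
      set P : ℕ → Prop := fun n => ∃ x ∈ J, (x : ℝ) ≤ c * n ∧ δ * n < (x : ℝ) with hPdef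
      have hSP : {n : ℕ | P n} ∈ ω := by
        apply ω.sets_of_superset hm
        intro n hn
        simp only [Set.mem_compl_iff, Set.mem_setOf_eq] at hn
        push_neg at hn
        obtain ⟨x, hx, h1, h2⟩ := hn
        exact ⟨x, hx, h1, h2⟩
      classical
      set u : ℕ → ℕ := fun n => if h : P n then h.choose else j with hu
      have huJ : ∀ n, u n ∈ J := by
        intro n
        by_cases h : P n
        · simp only [hu, dif_pos h]; exact h.choose_spec.1
        · simp only [hu, dif_neg h]; exact hj
      set K : ℝ := max c (j : ℝ) with hKdef
      have hub : ∀ n : ℕ, 1 ≤ n → (u n : ℝ) ≤ K * n := by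
        intro n hn
        have hn' : (1 : ℝ) ≤ n := by exact_mod_cast hn
        by_cases h : P n
        · simp only [hu, dif_pos h]
          calc ((h.choose : ℕ) : ℝ) ≤ c * n := h.choose_spec.2.1
            _ ≤ K * n := mul_le_mul_of_nonneg_right (le_max_left _ _) (by linarith)
        · simp only [hu, dif_neg h]
          calc (j : ℝ) = (j : ℝ) * 1 := by ring
            _ ≤ K * n := by
              apply mul_le_mul (le_max_right _ _) hn' zero_le_one
              exact le_trans (Nat.cast_nonneg j) (le_max_right _ _)
      obtain ⟨r, hr0, htend⟩ := exists_ulim ω u K hub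
      have hrc : r ∈ coneSet ω J := ⟨u, huJ, ⟨K, hub⟩, htend⟩
      have hrδ : δ ≤ r := by
        refine ge_of_tendsto htend ?_
        filter_upwards [hSP, hpos] with n hn hn1
        have hn' : (0 : ℝ) < n := by exact_mod_cast hn1
        have : δ * n < (u n : ℝ) := by
          simp only [hu, dif_pos hn]; exact hn.choose_spec.2.2
        rw [le_div_iff₀ hn']
        linarith
      have hrc' : r ≤ c := by
        refine le_of_tendsto htend ?_
        filter_upwards [hSP, hpos] with n hn hn1
        have hn' : (0 : ℝ) < n := by exact_mod_cast hn1
        have : (u n : ℝ) ≤ c * n := by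
          simp only [hu, dif_pos hn]; exact hn.choose_spec.2.1
        rw [div_le_iff₀ hn']
        linarith
      have : r = 0 := by
        apply hiso r hrc
        rw [abs_of_nonneg hr0]
        linarith
      linarith
    · -- ω-discrete → isolated
      rintro ⟨c, hc0, hc1, hc⟩
      refine ⟨c, hc0, ?_⟩
      intro r hr hrlt
      have hr0 : 0 ≤ r := cone_nonneg ω J r hr
      obtain ⟨u, huJ, ⟨C', hub⟩, htend⟩ := hr
      have hrc : r < c := by
        rw [abs_of_nonneg hr0] at hrlt; exact hrlt
      have key : ∀ ε : ℝ, 0 < ε → r ≤ ε := by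
        intro ε hε
        have hev : ∀ᶠ n in (ω : Filter ℕ), (u n : ℝ) / n < c :=
          htend.eventually_lt_const hrc
        refine le_of_tendsto htend ?_
        filter_upwards [hev, hc ε hε, hpos] with n h1 h2 h3
        have hn' : (0 : ℝ) < n := by exact_mod_cast h3
        have hle : (u n : ℝ) ≤ c * n := by
          rw [div_lt_iff₀ hn'] at h1; linarith
        have := h2 (u n) (huJ n) hle
        rw [div_le_iff₀ hn']
        linarith
      by_contra hne
      have hr0' : 0 < r := lt_of_le_of_ne hr0 (Ne.symm hne)
      have := key (r / 2) (by linarith)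
      linarith

end
end

section
/- There exists a subset I of the positive integers such that for every positive integer n and every subset J of {1,…,n}, there is a positive integer m with m ≥ n and I ∩ [m/n, n·m] = {j·m : j ∈ J}. -/
/-!
Enumerate all pairs `(n, J)` with `J ⊆ {1, …, n}` as `(N k, J k)`, and put into `I` the block
`{j · m k : j ∈ J k}`, which lies in `[m k, N k · m k]`. If the scales grow so fast that
`N k · N l · m l < m k` for `l < k`, then the window `[m k / N k, N k · m k]` of block `k` lies
strictly above every earlier block and strictly below every later one, so it meets `I` exactly
in block `k`.
-/

namespace BlockScale

variable (N : ℕ → ℕ)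

/-- `partialSum N k = ∑_{l < k} N l * scale N l`, unfolded so that it can be defined first. -/
def partialSum : ℕ → ℕ
  | 0 => 0
  | k + 1 => partialSum k + N k * (N k * (partialSum k + 1))

def scale (k : ℕ) : ℕ := N k * (partialSum N k + 1)

variable {N}

lemma partialSum_succ (k : ℕ) : partialSum N (k + 1) = partialSum N k + N k * scale N k := rfl

lemma partialSum_mono : Monotone (partialSum N) :=
  monotone_nat_of_le_succ fun k => by rw [partialSum_succ]; omega

lemma mul_scale_le_partialSum {l k : ℕ} (h : l < k) : N l * scale N l ≤ partialSum N k :=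
  calc N l * scale N l ≤ partialSum N (l + 1) := by rw [partialSum_succ]; omega
    _ ≤ partialSum N k := partialSum_mono h

lemma le_scale (k : ℕ) : N k ≤ scale N k := Nat.le_mul_of_pos_right _ (Nat.succ_pos _)

lemma scale_pos (hN : ∀ k, 0 < N k) (k : ℕ) : 0 < scale N k :=
  (hN k).trans_le (le_scale k)

lemma mul_mul_scale_lt_scale (hN : ∀ k, 0 < N k) {l k : ℕ} (h : l < k) :
    N k * (N l * scale N l) < scale N k :=
  Nat.mul_lt_mul_of_pos_left (Nat.lt_succ_of_le (mul_scale_le_partialSum h)) (hN k)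

end BlockScale

section Blocks

variable {N m : ℕ → ℕ} {J : ℕ → Set ℕ}

lemma mem_Icc_of_mem_block (hJ : ∀ k, J k ⊆ Set.Icc 1 (N k)) {l j : ℕ} (hj : j ∈ J l) :
    j * m l ∈ Set.Icc (m l) (N l * m l) :=
  ⟨Nat.le_mul_of_pos_left _ (hJ l hj).1, Nat.mul_le_mul_right _ (hJ l hj).2⟩

theorem sep_iUnion_blocks_window_eq (hN : ∀ k, 0 < N k) (hJ : ∀ k, J k ⊆ Set.Icc 1 (N k))
    (hsep : ∀ l k, l < k → N k * (N l * m l) < m k) (k : ℕ) :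
    {x ∈ ⋃ l, (· * m l) '' J l | m k ≤ N k * x ∧ x ≤ N k * m k} = (· * m k) '' J k := by
  ext x
  constructor
  · rintro ⟨hx, hlow, hhigh⟩
    obtain ⟨l, j, hj, rfl⟩ := Set.mem_iUnion.mp hx
    dsimp only at hlow hhigh
    obtain ⟨hjl, hju⟩ := mem_Icc_of_mem_block (m := m) hJ hj
    rcases lt_trichotomy l k with hlk | rfl | hkl
    · have := hsep l k hlk
      have : N k * (j * m l) ≤ N k * (N l * m l) := Nat.mul_le_mul_left _ hju
      omega
    · exact ⟨j, hj, rfl⟩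
    · have := hsep k l hkl
      have : N k * m k ≤ N l * (N k * m k) := Nat.le_mul_of_pos_left _ (hN l)
      omega
  · rintro ⟨j, hj, rfl⟩
    obtain ⟨hjl, hju⟩ := mem_Icc_of_mem_block (m := m) hJ hj
    exact ⟨Set.mem_iUnion.mpr ⟨k, j, hj, rfl⟩,
      hjl.trans (Nat.le_mul_of_pos_left _ (hN k)), hju⟩

end Blocks

lemma div_le_and_le_mul_iff {n m x : ℕ} (hn : 0 < n) :
    ((m : ℝ) / n ≤ x ∧ (x : ℝ) ≤ n * m) ↔ (m ≤ n * x ∧ x ≤ n * m) := by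
  rw [div_le_iff₀ (by exact_mod_cast hn), mul_comm (x : ℝ)]
  norm_cast

open BlockScale in
/-- Theorem: there exists a set `I` of positive integers such that for every positive
integer `n` and every subset `J ⊆ {1, …, n}` there is an integer `m ≥ n` with
`I ∩ [m/n, n·m] = {j·m : j ∈ J}`. -/
theorem statement14 :
    ∃ I : Set ℕ, (∀ x ∈ I, 0 < x) ∧
      ∀ n : ℕ, 0 < n → ∀ J ⊆ Set.Icc 1 n, ∃ m : ℕ, n ≤ m ∧
        {x ∈ I | (m : ℝ) / (n : ℝ) ≤ (x : ℝ) ∧ (x : ℝ) ≤ (n : ℝ) * (m : ℝ)} =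
          (fun j => j * m) '' J := by
  have : Nonempty {p : ℕ × Finset ℕ // 0 < p.1 ∧ (p.2 : Set ℕ) ⊆ Set.Icc 1 p.1} :=
    ⟨⟨(1, ∅), one_pos, by simp⟩⟩
  obtain ⟨e, he⟩ := exists_surjective_nat
    {p : ℕ × Finset ℕ // 0 < p.1 ∧ (p.2 : Set ℕ) ⊆ Set.Icc 1 p.1}
  set N : ℕ → ℕ := fun k => (e k).1.1
  set Js : ℕ → Set ℕ := fun k => ↑(e k).1.2
  have hN : ∀ k, 0 < N k := fun k => (e k).2.1
  have hJs : ∀ k, Js k ⊆ Set.Icc 1 (N k) := fun k => (e k).2.2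
  refine ⟨⋃ k, (· * scale N k) '' Js k, ?_, fun n hn J hJ => ?_⟩
  · rintro x ⟨_, ⟨k, rfl⟩, j, hj, rfl⟩
    exact Nat.mul_pos (hJs k hj).1 (scale_pos hN k)
  have hJfin : J.Finite := (Set.finite_Icc 1 n).subset hJ
  obtain ⟨k, hk⟩ := he ⟨(n, hJfin.toFinset), hn, by simpa using hJ⟩
  have hNk : N k = n := by simp [N, hk]
  have hJk : Js k = J := by simp [Js, hk]
  refine ⟨scale N k, hNk ▸ le_scale k, ?_⟩
  simp_rw [div_le_and_le_mul_iff hn, ← hNk, ← hJk]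
  exact sep_iUnion_blocks_window_eq hN hJs (fun l k h => mul_mul_scale_lt_scale hN h) k
end

section
/- There exists a subset K of the positive integers and a family (ω_x)_{x∈ℝ} of nonprincipal ultrafilters on the positive integers such that the subsets A_x = log(Cone_{ω_x}(K) ∖ {0}) of ℝ are pairwise at infinite Hausdorff distance: for all x ≠ y and every c ≥ 0, it is not the case that both A_x ⊆ A_y + [−c,c] and A_y ⊆ A_x + [−c,c]. In particular, the sets log(Cone_ω(K) ∖ {0}), as ω ranges over nonprincipal ultrafilters, achieve 2^ℵ₀ many subsets of ℝ at pairwise infinite Hausdorff distance. -/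
/-!
Block `m` of `K` consists of the numbers `2 ^ (m³ + i²)`, `i` running over the binary digits of
`m`. The cubes separate the blocks so strongly that, for large `m`, a quotient `k / 2 ^ m³` with
`k ∈ K` is a power of `2` of bounded exponent only if `k` lies in block `m`. Let `D x` be the set of
codes of the rationals below `x`, and let `ω x` live on the scales `2 ^ m³` of the blocks whose
digits are `D x ∩ [0, j)` together with `j`. Then `Cone_{ω x}(K) ∖ {0} = {2 ^ i² | i ∈ D x}`, whose
logarithm is `{i² log 2 | i ∈ D x}`. For `y < x` the set `D x ∖ D y` is infinite, and a square
`i²` is at distance at least `i` from every other square, so the two log-cones are at infinite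
Hausdorff distance.
-/

open Filter

noncomputable section

/-- `A ⊆ B + [-c, c]`. -/
def WithinHausdorff (c : ℝ) (A B : Set ℝ) : Prop :=
  ∀ a ∈ A, ∃ b ∈ B, |a - b| ≤ c

open Topology

theorem natCast_mem_coneSet {ω : Ultrafilter ℕ} (hω : (ω : Filter ℕ) ≤ cofinite) {J : Set ℕ}
    {k₀ : ℕ} (hk₀ : k₀ ∈ J) {a : ℕ} (h : ∀ᶠ n in ω, n * a ∈ J) : (a : ℝ) ∈ coneSet ω J := by
  classical
  refine ⟨fun n => if n * a ∈ J then n * a else k₀,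
    fun n => by dsimp only; split_ifs <;> assumption, ⟨a + k₀, fun n hn => ?_⟩,
    tendsto_const_nhds.congr' ?_⟩
  · have hn' : (1 : ℝ) ≤ n := by exact_mod_cast hn
    dsimp only
    split_ifs <;> push_cast <;> nlinarith [(Nat.cast_nonneg a : (0 : ℝ) ≤ a),
      (Nat.cast_nonneg k₀ : (0 : ℝ) ≤ k₀)]
  · filter_upwards [h, hω (eventually_cofinite_ne 0)] with n hn hn0
    rw [if_pos hn, Nat.cast_mul, mul_div_cancel_left₀ _ (Nat.cast_ne_zero.2 hn0)]

theorem exists_eventually_eq_of_tendsto_intCast {ι : Type*} {l : Filter ι} [l.NeBot]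
    {d : ι → ℤ} {a : ℝ} (h : Tendsto (fun j => (d j : ℝ)) l (𝓝 a)) :
    ∃ z : ℤ, ∀ᶠ j in l, d j = z := by
  obtain ⟨z, rfl⟩ : a ∈ Set.range ((↑) : ℤ → ℝ) :=
    Int.isClosedEmbedding_coe_real.isClosed_range.mem_of_tendsto h
      (Eventually.of_forall fun j => ⟨d j, rfl⟩)
  have hz := Int.isClosedEmbedding_coe_real.tendsto_nhds_iff.2 h
  rw [nhds_discrete, tendsto_pure] at hz
  exact ⟨z, hz⟩

theorem exists_eventually_eq_of_tendsto_zpow {ι : Type*} {l : Filter ι} [l.NeBot] {b r : ℝ}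
    (hb : 1 < b) (hr : r ≠ 0) {d : ι → ℤ} (h : Tendsto (fun j => b ^ d j) l (𝓝 r)) :
    ∃ z : ℤ, r = b ^ z ∧ ∀ᶠ j in l, d j = z := by
  have hr₀ : 0 < r :=
    (ge_of_tendsto' h fun j => (zpow_pos (zero_lt_one.trans hb) _).le).lt_of_ne' hr
  have hlogb : Real.log b ≠ 0 := (Real.log_pos hb).ne'
  have hd : Tendsto (fun j => (d j : ℝ)) l (𝓝 (Real.log r / Real.log b)) := by
    simpa [Real.log_zpow, hlogb] using
      ((Real.continuousAt_log hr).tendsto.comp h).div_const (Real.log b)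
  obtain ⟨z, hz⟩ := exists_eventually_eq_of_tendsto_intCast hd
  refine ⟨z, tendsto_nhds_unique h (tendsto_const_nhds.congr' ?_), hz⟩
  filter_upwards [hz] with j hj
  rw [hj]

theorem le_abs_sq_sub_sq {i m : ℕ} (h : m ≠ i) : (i : ℝ) ≤ |(i : ℝ) ^ 2 - (m : ℝ) ^ 2| := by
  rcases h.lt_or_gt with h | h
  · have h' : (m : ℝ) + 1 ≤ i := by exact_mod_cast h
    rw [abs_of_nonneg (by nlinarith [(Nat.cast_nonneg m : (0 : ℝ) ≤ m)])]
    nlinarith [(Nat.cast_nonneg m : (0 : ℝ) ≤ m)]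
  · have h' : (i : ℝ) + 1 ≤ m := by exact_mod_cast h
    rw [abs_of_nonpos (by nlinarith [(Nat.cast_nonneg i : (0 : ℝ) ≤ i)])]
    nlinarith [(Nat.cast_nonneg i : (0 : ℝ) ≤ i)]

theorem not_withinHausdorff_image_sq {S T : Set ℕ} (hST : (S \ T).Infinite) {a : ℝ}
    (ha : 0 < a) (c : ℝ) :
    ¬ WithinHausdorff c ((fun i : ℕ => (i : ℝ) ^ 2 * a) '' S)
      ((fun i : ℕ => (i : ℝ) ^ 2 * a) '' T) := by
  obtain ⟨i, ⟨hiS, hiT⟩, hci⟩ := hST.exists_gt ⌈c / a⌉₊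
  have hc : c < i * a := (div_lt_iff₀ ha).1 (Nat.lt_of_ceil_lt hci)
  intro hW
  obtain ⟨_, ⟨m, hmT, rfl⟩, hle⟩ := hW _ ⟨i, hiS, rfl⟩
  have hmi : m ≠ i := fun h => hiT (h ▸ hmT)
  have : (i : ℝ) * a ≤ |(i : ℝ) ^ 2 * a - (m : ℝ) ^ 2 * a| := by
    rw [← sub_mul, abs_mul, abs_of_pos ha]
    exact mul_le_mul_of_nonneg_right (le_abs_sq_sub_sq hmi) ha.le
  linarith

theorem lt_of_mem_equivBitIndices {i m : ℕ} (h : i ∈ Finset.equivBitIndices m) : i < m :=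
  (Nat.lt_two_pow_self).trans_le
    (Nat.two_pow_le_of_mem_bitIndices (List.mem_toFinset.1 (by simpa using h)))

theorem le_abs_cube_add_sq_sub_cube {m m' i : ℕ} (hi : i ≤ m') (hne : m' ≠ m) :
    (m : ℤ) ≤ |(m' : ℤ) ^ 3 + (i : ℤ) ^ 2 - (m : ℤ) ^ 3| := by
  have hi' : (i : ℤ) ≤ m' := by exact_mod_cast hi
  have hi₀ : (0 : ℤ) ≤ i := Int.natCast_nonneg i
  have hm₀ : (0 : ℤ) ≤ m := Int.natCast_nonneg m
  rcases hne.lt_or_gt with h | h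
  · have key : (m : ℤ) ≤ m ^ 3 - (m' ^ 3 + i ^ 2) := by
      obtain ⟨t, rfl⟩ := Nat.exists_eq_add_of_lt h
      have ht : (0 : ℤ) ≤ t := Int.natCast_nonneg t
      have hm' : (0 : ℤ) ≤ m' := hi₀.trans hi'
      push_cast
      nlinarith [mul_nonneg ht hm', mul_nonneg (mul_nonneg ht ht) ht,
        mul_nonneg (mul_nonneg ht hm') hm', mul_le_mul hi' hi' hi₀ hm']
    rwa [abs_sub_comm, abs_of_nonneg (hm₀.trans key)]
  · have key : (m : ℤ) ≤ m' ^ 3 + i ^ 2 - m ^ 3 := by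
      have h' : (m : ℤ) + 1 ≤ m' := by exact_mod_cast h
      nlinarith [pow_le_pow_left₀ (by linarith) h' 3]
    rwa [abs_of_nonneg (hm₀.trans key)]

theorem eq_of_abs_cube_add_sq_sub_cube_lt {m m' i : ℕ} (hi : i ∈ Finset.equivBitIndices m')
    (h : |(m' : ℤ) ^ 3 + (i : ℤ) ^ 2 - (m : ℤ) ^ 3| < m) : m' = m := by
  by_contra hne
  exact (le_abs_cube_add_sq_sub_cube (lt_of_mem_equivBitIndices hi).le hne).not_gt h

namespace ConeSeparation

def K : Set ℕ := {k | ∃ m, ∃ i ∈ Finset.equivBitIndices m, k = 2 ^ (m ^ 3 + i ^ 2)}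

def ratCodesBelow (x : ℝ) : Set ℕ := Encodable.encode '' {q : ℚ | (q : ℝ) < x}

theorem infinite_ratCodesBelow_diff {x y : ℝ} (h : y < x) :
    (ratCodesBelow x \ ratCodesBelow y).Infinite := by
  obtain ⟨q₁, hyq₁, hq₁x⟩ := exists_rat_btwn h
  obtain ⟨q₂, hq₁q₂, hq₂x⟩ := exists_rat_btwn hq₁x
  have hsub : Set.Ioo q₁ q₂ ⊆ {q : ℚ | (q : ℝ) < x} \ {q : ℚ | (q : ℝ) < y} := by
    intro q ⟨h₁, h₂⟩
    have h₁' : (q₁ : ℝ) < q := by exact_mod_cast h₁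
    have h₂' : (q : ℝ) < q₂ := by exact_mod_cast h₂
    exact ⟨by simp only [Set.mem_ofPred_eq]; linarith, by simp only [Set.mem_ofPred_eq]; linarith⟩
  rw [ratCodesBelow, ratCodesBelow, ← Set.image_sdiff Encodable.encode_injective]
  exact ((Set.Ioo_infinite (by exact_mod_cast hq₁q₂)).mono hsub).image
    Encodable.encode_injective.injOn

open Classical in
/-- The marker digit `j` makes `digitsAt x` injective, which keeps `scaleUltrafilter x`
nonprincipal. -/
def digitsAt (x : ℝ) (j : ℕ) : Finset ℕ :=
  insert j ((Finset.range j).filter (· ∈ ratCodesBelow x))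

theorem mem_digitsAt {x : ℝ} {i j : ℕ} :
    i ∈ digitsAt x j ↔ i = j ∨ i < j ∧ i ∈ ratCodesBelow x := by
  simp [digitsAt]

theorem digitsAt_injective (x : ℝ) : Function.Injective (digitsAt x) := by
  intro j j' h
  have h₁ := mem_digitsAt.1 (h ▸ mem_digitsAt.2 (Or.inl rfl) : j ∈ digitsAt x j')
  have h₂ := mem_digitsAt.1 (h ▸ mem_digitsAt.2 (Or.inl rfl) : j' ∈ digitsAt x j)
  omega

def blockAt (x : ℝ) (j : ℕ) : ℕ := Finset.equivBitIndices.symm (digitsAt x j)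

theorem equivBitIndices_blockAt (x : ℝ) (j : ℕ) :
    Finset.equivBitIndices (blockAt x j) = digitsAt x j :=
  Finset.equivBitIndices.apply_symm_apply _

theorem lt_blockAt (x : ℝ) (j : ℕ) : j < blockAt x j :=
  lt_of_mem_equivBitIndices ((equivBitIndices_blockAt x j).symm ▸ mem_digitsAt.2 (Or.inl rfl))

def scale (x : ℝ) (j : ℕ) : ℕ := 2 ^ blockAt x j ^ 3

theorem scale_injective (x : ℝ) : Function.Injective (scale x) :=
  (Nat.pow_right_injective le_rfl).comp <| (Nat.pow_left_injective three_ne_zero).comp <|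
    Finset.equivBitIndices.symm.injective.comp (digitsAt_injective x)

def scaleUltrafilter (x : ℝ) : Ultrafilter ℕ := (hyperfilter ℕ).map (scale x)

theorem scaleUltrafilter_le_cofinite (x : ℝ) : (scaleUltrafilter x : Filter ℕ) ≤ cofinite := by
  rw [scaleUltrafilter, Ultrafilter.coe_map]
  exact (map_mono hyperfilter_le_cofinite).trans (scale_injective x).tendsto_cofinite

theorem eventually_gt_hyperfilter (N : ℕ) : ∀ᶠ j in hyperfilter ℕ, N < j :=
  (eventually_gt_atTop N).filter_mono Nat.hyperfilter_le_atTop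

theorem two_pow_sq_mem_coneSet {x : ℝ} {i : ℕ} (hi : i ∈ ratCodesBelow x) :
    (2 : ℝ) ^ (i ^ 2) ∈ coneSet (scaleUltrafilter x) K := by
  have hK : ∀ j, i ∈ digitsAt x j → scale x j * 2 ^ (i ^ 2) ∈ K := fun j hij =>
    ⟨blockAt x j, i, (equivBitIndices_blockAt x j).symm ▸ hij, by rw [scale, pow_add]⟩
  have hev : ∀ᶠ n in scaleUltrafilter x, n * 2 ^ (i ^ 2) ∈ K := by
    rw [scaleUltrafilter, Ultrafilter.coe_map, eventually_map]
    filter_upwards [eventually_gt_hyperfilter i] with j hj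
    exact hK j (mem_digitsAt.2 (Or.inr ⟨hj, hi⟩))
  exact_mod_cast natCast_mem_coneSet (scaleUltrafilter_le_cofinite x)
    (hK i (mem_digitsAt.2 (Or.inl rfl))) hev

theorem exists_mem_ratCodesBelow_of_mem_coneSet {x r : ℝ}
    (hr : r ∈ coneSet (scaleUltrafilter x) K) (h₀ : r ≠ 0) :
    ∃ i ∈ ratCodesBelow x, r = (2 : ℝ) ^ (i ^ 2) := by
  obtain ⟨u, huK, -, hu⟩ := hr
  choose m i hi hum using
    fun j => (huK (scale x j) : ∃ m, ∃ i ∈ Finset.equivBitIndices m, _)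
  set d : ℕ → ℤ := fun j => (m j : ℤ) ^ 3 + (i j : ℤ) ^ 2 - (blockAt x j : ℤ) ^ 3 with hd
  have hratio : ∀ j, (u (scale x j) : ℝ) / scale x j = (2 : ℝ) ^ d j := by
    intro j
    rw [hum j, scale, hd, zpow_sub₀ two_ne_zero]
    norm_cast
  have hT : Tendsto (fun j => (2 : ℝ) ^ d j) (hyperfilter ℕ) (𝓝 r) := by
    rw [scaleUltrafilter, Ultrafilter.coe_map] at hu
    exact (hu.comp tendsto_map).congr hratio
  obtain ⟨z, rfl, hdz⟩ := exists_eventually_eq_of_tendsto_zpow one_lt_two h₀ hT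
  obtain ⟨j, hjz, hj⟩ := (hdz.and (eventually_gt_hyperfilter z.natAbs)).exists
  have hjz' : |z| < j := by rw [Int.abs_eq_natAbs]; exact_mod_cast hj
  have hblock : m j = blockAt x j := by
    refine eq_of_abs_cube_add_sq_sub_cube_lt (hi j) ?_
    change |d j| < blockAt x j
    have := lt_blockAt x j
    rw [hjz]
    omega
  have hz : z = (i j : ℤ) ^ 2 := by
    rw [← hjz]
    simp only [d, hblock]
    ring
  have hij : i j ∈ digitsAt x j := equivBitIndices_blockAt x j ▸ hblock ▸ hi j
  rcases mem_digitsAt.1 hij with hij | ⟨-, hiD⟩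
  · rw [hz, hij] at hjz'
    nlinarith [abs_nonneg ((j : ℤ) ^ 2), le_abs_self ((j : ℤ) ^ 2)]
  · exact ⟨i j, hiD, by rw [hz]; norm_cast⟩

theorem coneSet_diff_zero (x : ℝ) :
    coneSet (scaleUltrafilter x) K \ {0} =
      (fun i : ℕ => (2 : ℝ) ^ (i ^ 2)) '' ratCodesBelow x := by
  ext r
  constructor
  · rintro ⟨hr, hr₀⟩
    obtain ⟨i, hi, rfl⟩ := exists_mem_ratCodesBelow_of_mem_coneSet hr hr₀
    exact ⟨i, hi, rfl⟩
  · rintro ⟨i, hi, rfl⟩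
    exact ⟨two_pow_sq_mem_coneSet hi, pow_ne_zero _ two_ne_zero⟩

def logCone (x : ℝ) : Set ℝ := Real.log '' (coneSet (scaleUltrafilter x) K \ {0})

theorem logCone_eq (x : ℝ) :
    logCone x = (fun i : ℕ => (i : ℝ) ^ 2 * Real.log 2) '' ratCodesBelow x := by
  rw [logCone, coneSet_diff_zero, Set.image_image]
  simp [Real.log_pow]

theorem not_withinHausdorff_logCone_of_lt {x y : ℝ} (h : y < x) (c : ℝ) :
    ¬ WithinHausdorff c (logCone x) (logCone y) := by
  rw [logCone_eq, logCone_eq]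
  exact not_withinHausdorff_image_sq (infinite_ratCodesBelow_diff h) (Real.log_pos one_lt_two) c

theorem not_withinHausdorff_logCone_and {x y : ℝ} (hxy : x ≠ y) (c : ℝ) :
    ¬ (WithinHausdorff c (logCone x) (logCone y) ∧ WithinHausdorff c (logCone y) (logCone x)) := by
  rintro ⟨hxy', hyx'⟩
  rcases hxy.lt_or_gt with h | h
  · exact not_withinHausdorff_logCone_of_lt h c hyx'
  · exact not_withinHausdorff_logCone_of_lt h c hxy'

theorem logCone_injective : Function.Injective logCone := by
  intro x y hxy
  by_contra hne
  have hself : WithinHausdorff 0 (logCone y) (logCone y) := fun a ha => ⟨a, ha, by simp⟩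
  exact not_withinHausdorff_logCone_and hne 0 ⟨hxy ▸ hself, hxy ▸ hself⟩

end ConeSeparation

/-- Theorem: there exist a set `K` of positive integers and a family `(ω_x)_{x ∈ ℝ}` of
nonprincipal ultrafilters such that the sets `A_x = log(Cone_{ω_x}(K) ∖ {0}) ⊆ ℝ` are
pairwise at infinite Hausdorff distance; in particular, as `ω` ranges over nonprincipal
ultrafilters, the sets `log(Cone_ω(K) ∖ {0})` achieve `2^ℵ₀` many distinct subsets of `ℝ`
at pairwise infinite Hausdorff distance. -/
theorem statement15 :
    ∃ (K : Set ℕ), (∀ x ∈ K, 0 < x) ∧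
      ∃ ω : ℝ → Ultrafilter ℕ, (∀ x, ((ω x : Filter ℕ)) ≤ Filter.cofinite) ∧
        (∀ x y : ℝ, x ≠ y → ∀ c : ℝ, 0 ≤ c →
          ¬ (WithinHausdorff c (Real.log '' (coneSet (ω x) K \ {0}))
                (Real.log '' (coneSet (ω y) K \ {0})) ∧
             WithinHausdorff c (Real.log '' (coneSet (ω y) K \ {0}))
                (Real.log '' (coneSet (ω x) K \ {0})))) ∧
        Function.Injective (fun x : ℝ => Real.log '' (coneSet (ω x) K \ {0})) := by
  refine ⟨ConeSeparation.K, ?_, ConeSeparation.scaleUltrafilter,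
    ConeSeparation.scaleUltrafilter_le_cofinite,
    fun x y hxy c _ => ConeSeparation.not_withinHausdorff_logCone_and hxy c,
    ConeSeparation.logCone_injective⟩
  rintro _ ⟨m, i, -, rfl⟩
  positivity
end
end
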